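/- There exists a constant C > 1 such that for all h ∈ GL₂(ℝ): C^{-1} y(h)^{-1} ≤ |tr(T_θ s(h)^{-1} ε₁)| ≤ C y(h)^{-1}, where y(h) := |a| for the Iwasawa decomposition h ∈ [[az, b],[0, z]]·O(2) with a > 0 (h = upper-triangular times orthogonal), s(h)^{-1} is the inverse of the action X ↦ (det h)^{-1} hᵀ X h on symmetric matrices, and ε₁ = [[1,0],[0,0]]. -/

import Mathlib

open Matrix
/-- The Iwasawa height `y(h) = |a|` for `h = [[az, b],[0, z]]·k`, `k ∈ O(2)`, `a > 0`:
since `(h hᵀ)₂₂ = z²` and `|det h| = a z²`, one has `y(h) = |det h| / (h hᵀ)₂₂`. -/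
noncomputable def yIw (h : Matrix (Fin 2) (Fin 2) ℝ) : ℝ :=
  |h.det| / ((h * hᵀ) 1 1)

/-- The quadratic form `Q(x,y) = y² - t x y + N x²` (positive definite when
`N - t²/4 > 0`) is comparable to the Euclidean norm `x² + y²`. -/
lemma quadBounds (t N : ℝ) (hδ : 0 < N - t^2/4) :
    ∃ C > (1 : ℝ), ∀ x y : ℝ,
      C⁻¹ * (x^2 + y^2) ≤ y^2 - t*x*y + N*x^2 ∧
      y^2 - t*x*y + N*x^2 ≤ C * (x^2 + y^2) := by
  refine ⟨(2 + (t^2/2 + 1)/(N - t^2/4)) + (1 + |t| + |N|) + 1, ?_, ?_⟩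
  · have h1 : 0 < (t^2/2 + 1)/(N - t^2/4) := by positivity
    have h2 : 0 ≤ |t| := abs_nonneg t
    have h3 : 0 ≤ |N| := abs_nonneg N
    linarith
  intro x y
  have h1 : 0 < (t^2/2 + 1)/(N - t^2/4) := by positivity
  have h2 : 0 ≤ |t| := abs_nonneg t
  have h3 : 0 ≤ |N| := abs_nonneg N
  have hCpos : 0 < (2 + (t^2/2 + 1)/(N - t^2/4)) + (1 + |t| + |N|) + 1 := by linarith
  have hxy : |x*y| ≤ (x^2 + y^2)/2 := by
    rw [abs_mul]
    nlinarith [sq_nonneg (|x| - |y|), sq_abs x, sq_abs y]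
  have hupper : y^2 - t*x*y + N*x^2 ≤
      ((2 + (t^2/2 + 1)/(N - t^2/4)) + (1 + |t| + |N|) + 1) * (x^2 + y^2) := by
    have ha : -(t*x*y) ≤ |t| * ((x^2+y^2)/2) := by
      calc -(t*x*y) ≤ |t*x*y| := neg_le_abs _
        _ = |t| * |x*y| := by rw [mul_assoc, abs_mul]
        _ ≤ |t| * ((x^2+y^2)/2) := mul_le_mul_of_nonneg_left hxy h2
    have hb : N*x^2 ≤ |N| * x^2 := mul_le_mul_of_nonneg_right (le_abs_self N) (sq_nonneg x)
    nlinarith [sq_nonneg x, sq_nonneg y]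
  have hlower : x^2 + y^2 ≤
      ((2 + (t^2/2 + 1)/(N - t^2/4)) + (1 + |t| + |N|) + 1) * (y^2 - t*x*y + N*x^2) := by
    have hQnn : 0 ≤ y^2 - t*x*y + N*x^2 := by
      nlinarith [sq_nonneg (y - t*x/2), sq_nonneg x]
    have key : (N - t^2/4) * (x^2 + y^2) ≤
        (2*(N - t^2/4) + (t^2/2 + 1)) * (y^2 - t*x*y + N*x^2) := by
      nlinarith [sq_nonneg (y - t*x), mul_nonneg hδ.le (sq_nonneg (y - t*x/2)),
        mul_nonneg hδ.le (sq_nonneg x), mul_nonneg (mul_nonneg hδ.le hδ.le) (sq_nonneg x),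
        mul_nonneg (sq_nonneg t) (sq_nonneg x),
        mul_nonneg (sq_nonneg t) (sq_nonneg (y - t*x/2)),
        sq_nonneg (y - t*x/2), sq_nonneg x]
    have hne : (N - t^2/4) ≠ 0 := ne_of_gt hδ
    have hp : (t^2/2 + 1)/(N - t^2/4) * (N - t^2/4) = t^2/2 + 1 := div_mul_cancel₀ _ hne
    have hp2 : (t^2/2 + 1)/(N - t^2/4) * (N - t^2/4) * (y^2 - t*x*y + N*x^2)
        = (t^2/2 + 1) * (y^2 - t*x*y + N*x^2) := by rw [hp]
    have hA : x^2 + y^2 ≤ (2 + (t^2/2 + 1)/(N - t^2/4)) * (y^2 - t*x*y + N*x^2) := by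
      rw [← mul_le_mul_iff_right₀ hδ]
      nlinarith [key, hp2]
    have : (2 + (t^2/2 + 1)/(N - t^2/4)) * (y^2 - t*x*y + N*x^2) ≤
        ((2 + (t^2/2 + 1)/(N - t^2/4)) + (1 + |t| + |N|) + 1) * (y^2 - t*x*y + N*x^2) := by
      nlinarith
    linarith
  refine ⟨?_, hupper⟩
  rw [inv_mul_le_iff₀ hCpos]
  linarith

/-- Explicit computation of the trace pairing: for invertible `h`,
`tr(det h • ((h⁻¹)ᵀ T_θ h⁻¹) · ε₁) = Q(h₁₀, h₁₁) / det h`. -/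
lemma trace_key (t N : ℝ) (h : Matrix (Fin 2) (Fin 2) ℝ) (hd : h.det ≠ 0) :
    Matrix.trace ((h.det • ((h⁻¹)ᵀ * !![1, t / 2; t / 2, N] * h⁻¹)) *
          (!![1, 0; 0, 0] : Matrix (Fin 2) (Fin 2) ℝ)) =
    (h 1 1 ^ 2 - t * (h 1 0) * (h 1 1) + N * (h 1 0)^2) * (h.det)⁻¹ := by
  have hd' : h 0 0 * h 1 1 - h 0 1 * h 1 0 ≠ 0 := by rwa [Matrix.det_fin_two] at hd
  rw [Matrix.inv_def]
  simp only [Matrix.trace_fin_two, Matrix.mul_apply, Fin.sum_univ_two, Matrix.adjugate_fin_two,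
    Ring.inverse_eq_inv', Matrix.det_fin_two, Matrix.transpose_apply, Matrix.vecHead,
    Matrix.vecTail, Matrix.smul_apply, Matrix.cons_val', Matrix.cons_val_zero,
    Matrix.cons_val_one, Matrix.head_cons, Matrix.head_fin_const, Matrix.of_apply,
    Matrix.empty_val', Matrix.cons_val_fin_one, smul_eq_mul, Function.comp]
  field_simp
  ring

lemma yIw_inv (h : Matrix (Fin 2) (Fin 2) ℝ) :
    (yIw h)⁻¹ = ((h 1 0)^2 + (h 1 1)^2) / |h.det| := by
  have : (h * hᵀ) 1 1 = (h 1 0)^2 + (h 1 1)^2 := by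
    simp [Matrix.mul_apply, Fin.sum_univ_two, Matrix.transpose_apply]; ring
  rw [yIw, this, inv_div]

/-- There is a constant `C > 1` such that for every `h ∈ GL₂(ℝ)`:
`C⁻¹ y(h)⁻¹ ≤ |tr(T_θ s(h)⁻¹ ε₁)| ≤ C y(h)⁻¹`, where `T_θ s(h)⁻¹` is the image of
`T_θ` under `X ↦ (det h⁻¹)⁻¹ (h⁻¹)ᵀ X h⁻¹ = det h • ((h⁻¹)ᵀ X h⁻¹)` and
`ε₁ = [[1,0],[0,0]]`.  Here `T_θ = [[1, t/2],[t/2, N]]` has positive determinant. -/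
theorem stmt19 (t N : ℝ)
    (hpos : 0 < (!![1, t / 2; t / 2, N] : Matrix (Fin 2) (Fin 2) ℝ).det) :
    ∃ C > (1 : ℝ), ∀ h : Matrix (Fin 2) (Fin 2) ℝ, IsUnit h.det →
      C⁻¹ * (yIw h)⁻¹ ≤
        |Matrix.trace ((h.det • ((h⁻¹)ᵀ * !![1, t / 2; t / 2, N] * h⁻¹)) *
          (!![1, 0; 0, 0] : Matrix (Fin 2) (Fin 2) ℝ))| ∧
      |Matrix.trace ((h.det • ((h⁻¹)ᵀ * !![1, t / 2; t / 2, N] * h⁻¹)) *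
          (!![1, 0; 0, 0] : Matrix (Fin 2) (Fin 2) ℝ))| ≤ C * (yIw h)⁻¹ := by
  have hδ : 0 < N - t^2/4 := by
    rw [Matrix.det_fin_two] at hpos
    simp only [Matrix.cons_val_zero, Matrix.cons_val_one, Matrix.head_cons,
      Matrix.cons_val', Matrix.of_apply, Matrix.empty_val', Matrix.cons_val_fin_one,
      Matrix.head_fin_const] at hpos
    nlinarith [hpos]
  obtain ⟨C, hC1, hCq⟩ := quadBounds t N hδ
  have hCpos : 0 < C := lt_trans one_pos hC1
  refine ⟨C, hC1, ?_⟩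
  intro h hu
  have hd : h.det ≠ 0 := hu.ne_zero
  have hdabs : 0 < |h.det| := abs_pos.mpr hd
  rw [trace_key t N h hd, yIw_inv]
  obtain ⟨hlow, hup⟩ := hCq (h 1 0) (h 1 1)
  have hQnn : 0 ≤ h 1 1 ^ 2 - t * (h 1 0) * (h 1 1) + N * (h 1 0)^2 := by
    nlinarith [sq_nonneg (h 1 1 - t * (h 1 0)/2), sq_nonneg (h 1 0)]
  have habs : |(h 1 1 ^ 2 - t * (h 1 0) * (h 1 1) + N * (h 1 0)^2) * (h.det)⁻¹|
      = (h 1 1 ^ 2 - t * (h 1 0) * (h 1 1) + N * (h 1 0)^2) / |h.det| := by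
    rw [abs_mul, abs_inv, abs_of_nonneg hQnn, div_eq_mul_inv]
  rw [habs]
  constructor
  · rw [mul_div_assoc']
    exact div_le_div_of_nonneg_right (by linarith [hlow]) hdabs.le
  · rw [mul_div_assoc']
    exact div_le_div_of_nonneg_right (by linarith [hup]) hdabs.le
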